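/- Let K = ℚ(√d) with d a negative squarefree integer, let w be the number of roots of unity in K, and let m ∈ ℤ satisfy 2m ≢ 0 (mod w). Then for every positive integer n, the finite sum Σ_{α ∈ V, N(α) = n} (α/ᾱ)^m equals 0. -/

import Mathlib

open MeasureTheory

/-- √d as a complex number: positive real square root for d ≥ 0, and
    i·√|d| (positive imaginary part) for d < 0. -/
noncomputable def sqrtd (d : ℤ) : ℂ :=
  if 0 ≤ d then ((Real.sqrt d : ℝ) : ℂ) else Complex.I * ((Real.sqrt (-d) : ℝ) : ℂ)

/-- ω = √d if d ≡ 2,3 mod 4 and ω = (1+√d)/2 if d ≡ 1 mod 4. -/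
noncomputable def omg (d : ℤ) : ℂ :=
  if d % 4 = 1 then (1 + sqrtd d) / 2 else sqrtd d

/-- The conjugate ω̄ of ω. -/
noncomputable def omgBar (d : ℤ) : ℂ :=
  if d % 4 = 1 then (1 - sqrtd d) / 2 else -sqrtd d

/-- The element a + bω of O = ℤ ⊕ ℤω. -/
noncomputable def elt (d a b : ℤ) : ℂ := (a : ℂ) + (b : ℂ) * omg d

/-- The conjugate a + bω̄ of a + bω. -/
noncomputable def eltBar (d a b : ℤ) : ℂ := (a : ℂ) + (b : ℂ) * omgBar d

/-- The norm N(a + bω) = (a+bω)(a+bω̄) as a rational integer. -/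
def Nrm (d a b : ℤ) : ℤ :=
  if d % 4 = 1 then a ^ 2 + a * b + b ^ 2 * ((1 - d) / 4) else a ^ 2 - d * b ^ 2

/-- Membership in the ring of integers O = ℤ ⊕ ℤω. -/
def InO (d : ℤ) (z : ℂ) : Prop := ∃ a b : ℤ, z = elt d a b

/-- z is a unit of the ring O. -/
def IsUnitO (d : ℤ) (z : ℂ) : Prop := InO d z ∧ ∃ y : ℂ, InO d y ∧ z * y = 1

/-- z is a visible point: z = a + bω with gcd(a,b) = 1. -/
def Visible (d : ℤ) (z : ℂ) : Prop := ∃ a b : ℤ, Int.gcd a b = 1 ∧ z = elt d a b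

/-- γ ∼ γ' : there are a unit υ and positive integers m, n with υmγ' = nγ. -/
def Sim (d : ℤ) (γ γ' : ℂ) : Prop :=
  ∃ υ : ℂ, IsUnitO d υ ∧ ∃ m n : ℕ, 0 < m ∧ 0 < n ∧ υ * (m : ℂ) * γ' = (n : ℂ) * γ

/-- The set N of elements of K = ℚ(√d) of norm 1. -/
noncomputable def NormOne (d : ℤ) : Set ℂ :=
  {z | ∃ a b : ℚ, z = (a : ℂ) + (b : ℂ) * sqrtd d ∧ a ^ 2 - (d : ℚ) * b ^ 2 = 1}

/-- w, the number of roots of unity in the imaginary quadratic field ℚ(√d):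
    4 if d = −1, 6 if d = −3, and 2 otherwise. -/
def rootsOfUnityCount (d : ℤ) : ℕ := if d = -1 then 4 else if d = -3 then 6 else 2


/-! Multiplication by a root of unity `u ∈ O` permutes the visible points of norm `n`, and since
`ū = u⁻¹` it multiplies each summand `(α/ᾱ)^m` by `u^(2m)`. So the sum `S` satisfies
`S = u^(2m) S`, which forces `S = 0` as soon as `u^(2m) ≠ 1`. When `w = 2` the hypothesis
`w ∤ 2m` is never met; for `d = -1` and `d = -3` take `u = ω`, a primitive `w`-th root of unity. -/

open Complex Polynomial

theorem Finset.sum_eq_zero_of_comp_equiv_eq_mul {ι R : Type*} [Ring R] [NoZeroDivisors R]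
    {s : Finset ι} {f : ι → R} (σ : ι ≃ ι) (hσ : ∀ i, σ i ∈ s ↔ i ∈ s) {e : R} (he : e ≠ 1)
    (hf : ∀ i ∈ s, f (σ i) = e * f i) : ∑ i ∈ s, f i = 0 := by
  have hperm : ∑ i ∈ s, f (σ i) = ∑ i ∈ s, f i :=
    Finset.sum_equiv σ (fun i => (hσ i).symm) fun _ _ => rfl
  have hfix : (1 - e) * ∑ i ∈ s, f i = 0 := by
    rw [sub_mul, one_mul, Finset.mul_sum, ← Finset.sum_congr rfl hf, hperm, sub_self]
  exact (mul_eq_zero.mp hfix).resolve_left (sub_ne_zero.mpr he.symm)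

theorem sqrtd_sq (d : ℤ) : sqrtd d ^ 2 = d := by
  unfold sqrtd
  split_ifs with hd
  · rw [← ofReal_pow, Real.sq_sqrt (by exact_mod_cast hd)]
    simp
  · have hd' : (0 : ℝ) ≤ -d := neg_nonneg.mpr (by exact_mod_cast (not_le.mp hd).le)
    rw [mul_pow, I_sq, ← ofReal_pow, Real.sq_sqrt hd']
    push_cast
    ring

theorem elt_mul_eltBar (d a b : ℤ) : elt d a b * eltBar d a b = Nrm d a b := by
  have hsq := sqrtd_sq d
  unfold elt eltBar omg omgBar Nrm
  split_ifs with hd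
  · obtain ⟨k, rfl⟩ : ∃ k, d = 4 * k + 1 := ⟨d / 4, by omega⟩
    rw [show (1 - (4 * k + 1)) / 4 = -k by omega]
    push_cast at hsq ⊢
    linear_combination (-(b : ℂ) ^ 2 / 4) * hsq
  · push_cast
    linear_combination (-(b : ℂ) ^ 2) * hsq

section VisibleSum

variable {d : ℤ} {n : ℕ}

theorem sum_visible_eq_zero_of_unit (m : ℤ)
    (hfin : {p : ℤ × ℤ | Int.gcd p.1 p.2 = 1 ∧ Nrm d p.1 p.2 = (n : ℤ)}.Finite)
    (σ : ℤ × ℤ ≃ ℤ × ℤ) {u : ℂ} (hu : u ≠ 0)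
    (helt : ∀ p, elt d (σ p).1 (σ p).2 = u * elt d p.1 p.2)
    (heltBar : ∀ p, eltBar d (σ p).1 (σ p).2 = u⁻¹ * eltBar d p.1 p.2)
    (hgcd : ∀ p : ℤ × ℤ, Int.gcd (σ p).1 (σ p).2 = Int.gcd p.1 p.2)
    (hum : u ^ (2 * m) ≠ 1) :
    ∑ p ∈ hfin.toFinset, (elt d p.1 p.2 / eltBar d p.1 p.2) ^ m = 0 := by
  have hNrm : ∀ p : ℤ × ℤ, Nrm d (σ p).1 (σ p).2 = Nrm d p.1 p.2 := fun p => by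
    have h := congrArg₂ (· * ·) (helt p) (heltBar p)
    simp only [elt_mul_eltBar] at h
    rw [mul_mul_mul_comm, mul_inv_cancel₀ hu, one_mul, elt_mul_eltBar] at h
    exact_mod_cast h
  refine Finset.sum_eq_zero_of_comp_equiv_eq_mul σ (fun p => ?_) hum fun p _ => ?_
  · simp only [Set.Finite.mem_toFinset, Set.mem_ofPred_eq, hgcd, hNrm]
  · rw [helt, heltBar, mul_div_mul_comm, div_inv_eq_mul, mul_zpow, ← sq, ← zpow_natCast,
      ← zpow_mul, Nat.cast_ofNat]

end VisibleSum

def mulOmegaNegOne : ℤ × ℤ ≃ ℤ × ℤ where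
  toFun p := (-p.2, p.1)
  invFun p := (p.2, -p.1)
  left_inv _ := by simp
  right_inv _ := by simp

-- `ω² = ω - 1` for `d = -3`, so `ω (a + bω) = -b + (a + b)ω`.
def mulOmegaNegThree : ℤ × ℤ ≃ ℤ × ℤ where
  toFun p := (-p.2, p.1 + p.2)
  invFun p := (p.1 + p.2, -p.1)
  left_inv _ := by simp
  right_inv _ := by simp

theorem omg_neg_one : omg (-1) = I := by norm_num [omg, sqrtd]

theorem omgBar_neg_one : omgBar (-1) = I⁻¹ := by norm_num [omgBar, sqrtd]

theorem omg_neg_three_sq : omg (-3) ^ 2 = omg (-3) - 1 := by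
  have hsq := sqrtd_sq (-3)
  norm_num [omg] at hsq ⊢
  linear_combination hsq / 4

theorem omgBar_neg_three : omgBar (-3) = (omg (-3))⁻¹ := by
  have hsq := sqrtd_sq (-3)
  refine eq_inv_of_mul_eq_one_right ?_
  norm_num [omg, omgBar] at hsq ⊢
  linear_combination -hsq / 4

theorem omgBar_neg_three_sq : omgBar (-3) ^ 2 = omgBar (-3) - 1 := by
  have hsq := sqrtd_sq (-3)
  norm_num [omgBar] at hsq ⊢
  linear_combination hsq / 4

theorem isPrimitiveRoot_omg_neg_three : IsPrimitiveRoot (omg (-3)) 6 := by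
  rw [← isRoot_cyclotomic_iff, cyclotomic_six]
  simp [omg_neg_three_sq]

theorem elt_mulOmegaNegOne (p : ℤ × ℤ) :
    elt (-1) (mulOmegaNegOne p).1 (mulOmegaNegOne p).2 = I * elt (-1) p.1 p.2 := by
  simp only [mulOmegaNegOne, Equiv.coe_fn_mk, elt, omg_neg_one]
  push_cast
  linear_combination (-(p.2 : ℂ)) * I_sq

theorem eltBar_mulOmegaNegOne (p : ℤ × ℤ) :
    eltBar (-1) (mulOmegaNegOne p).1 (mulOmegaNegOne p).2 = I⁻¹ * eltBar (-1) p.1 p.2 := by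
  simp only [mulOmegaNegOne, Equiv.coe_fn_mk, eltBar, omgBar_neg_one, inv_I]
  push_cast
  linear_combination (-(p.2 : ℂ)) * I_sq

theorem elt_mulOmegaNegThree (p : ℤ × ℤ) :
    elt (-3) (mulOmegaNegThree p).1 (mulOmegaNegThree p).2 = omg (-3) * elt (-3) p.1 p.2 := by
  simp only [mulOmegaNegThree, Equiv.coe_fn_mk, elt]
  push_cast
  linear_combination (-(p.2 : ℂ)) * omg_neg_three_sq

theorem eltBar_mulOmegaNegThree (p : ℤ × ℤ) :
    eltBar (-3) (mulOmegaNegThree p).1 (mulOmegaNegThree p).2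
      = (omg (-3))⁻¹ * eltBar (-3) p.1 p.2 := by
  simp only [mulOmegaNegThree, Equiv.coe_fn_mk, eltBar, ← omgBar_neg_three]
  push_cast
  linear_combination (-(p.2 : ℂ)) * omgBar_neg_three_sq

theorem visible_sum_vanishes_general
    (d : ℤ)
    (m : ℤ) (hm : ¬ ((rootsOfUnityCount d : ℤ) ∣ 2 * m))
    (n : ℕ)
    (hfin : {p : ℤ × ℤ | Int.gcd p.1 p.2 = 1 ∧ Nrm d p.1 p.2 = (n : ℤ)}.Finite) :
    ∑ p ∈ hfin.toFinset, (elt d p.1 p.2 / eltBar d p.1 p.2) ^ m = 0 := by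
  by_cases hd1 : d = -1
  · subst hd1
    have hw : ¬ ((4 : ℕ) : ℤ) ∣ 2 * m := by simpa [rootsOfUnityCount] using hm
    exact sum_visible_eq_zero_of_unit m hfin mulOmegaNegOne I_ne_zero elt_mulOmegaNegOne
      eltBar_mulOmegaNegOne (fun p => by simp [mulOmegaNegOne, Int.gcd_comm])
      (by rwa [Ne, isPrimitiveRoot_I.zpow_eq_one_iff_dvd])
  by_cases hd3 : d = -3
  · subst hd3
    have hw : ¬ ((6 : ℕ) : ℤ) ∣ 2 * m := by simpa [rootsOfUnityCount] using hm
    exact sum_visible_eq_zero_of_unit m hfin mulOmegaNegThree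
      (isPrimitiveRoot_omg_neg_three.ne_zero (by norm_num)) elt_mulOmegaNegThree
      eltBar_mulOmegaNegThree (fun p => by simp [mulOmegaNegThree, Int.gcd_comm])
      (by rwa [Ne, isPrimitiveRoot_omg_neg_three.zpow_eq_one_iff_dvd])
  · exact absurd ⟨m, by simp [rootsOfUnityCount, hd1, hd3]⟩ hm

/-- For K = ℚ(√d) imaginary quadratic and 2m ≢ 0 mod w, for every n ≥ 1 the
    finite sum of (α/ᾱ)^m over the visible points α of norm n vanishes. -/
theorem visible_sum_vanishes
    (d : ℤ) (hd : Squarefree d) (hdneg : d < 0)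
    (m : ℤ) (hm : ¬ ((rootsOfUnityCount d : ℤ) ∣ 2 * m))
    (n : ℕ) (hn : 0 < n)
    (hfin : {p : ℤ × ℤ | Int.gcd p.1 p.2 = 1 ∧ Nrm d p.1 p.2 = (n : ℤ)}.Finite) :
    ∑ p ∈ hfin.toFinset, (elt d p.1 p.2 / eltBar d p.1 p.2) ^ m = 0 :=
  visible_sum_vanishes_general d m hm n hfin
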